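/- Let φ : T → T be injective and |λ| < 1. Then the operator C_φ − λ·Id has dense range on Lip_0(T); more precisely, for every vertex w, the characteristic function χ_{w} lies in the range of C_φ − λ. -/

import Mathlib

/-- An infinite, locally finite rooted tree in which every vertex other than
the root has degree greater than 1, together with the parent map. -/
structure LipTree (V : Type*) where
  root : V
  G : SimpleGraph V
  isTree : G.IsTree
  locFin : ∀ v : V, (G.neighborSet v).Finite
  infinite : Infinite V
  deg_gt : ∀ v : V, v ≠ root → 1 < (G.neighborSet v).ncard
  par : V → V
  par_root : par root = root
  adj_par : ∀ v : V, v ≠ root → G.Adj v (par v)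
  dist_par : ∀ v : V, v ≠ root → G.dist (par v) root + 1 = G.dist v root

namespace LipTree

variable {V : Type*}

/-- `|v|`, the distance from `v` to the root. -/
noncomputable def depth (T : LipTree V) (v : V) : ℕ := T.G.dist v T.root

/-- membership in the Lipschitz space `Lip(T)`. -/
def MemLip (T : LipTree V) (f : V → ℂ) : Prop :=
  ∃ C : ℝ, ∀ v : V, v ≠ T.root → ‖f v - f (T.par v)‖ ≤ C

/-- membership in the little Lipschitz space `Lip₀(T)`. -/
def MemLip0 (T : LipTree V) (f : V → ℂ) : Prop :=
  T.MemLip f ∧ ∀ ε : ℝ, 0 < ε → ∃ N : ℕ, ∀ v : V, v ≠ T.root → N ≤ T.depth v →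
    ‖f v - f (T.par v)‖ < ε

/-- the norm `‖f‖_Lip = max {|f(root)|, sup_{v ≠ root} |f(v) - f(v⁻)|}`. -/
noncomputable def normLip (T : LipTree V) (f : V → ℂ) : ℝ :=
  max (‖f T.root‖)
    (sSup {r : ℝ | ∃ v : V, v ≠ T.root ∧ r = ‖f v - f (T.par v)‖})

/-- `φ` is a Lipschitz self-map of the tree. -/
noncomputable def LipschitzSelfMap (T : LipTree V) (φ : V → V) : Prop :=
  ∃ C : ℕ, ∀ v : V, v ≠ T.root → T.G.dist (φ v) (φ (T.par v)) ≤ C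

/-- the Lipschitz number `λ_φ`. -/
noncomputable def lipNum (T : LipTree V) (φ : V → V) : ℝ :=
  sSup {r : ℝ | ∃ v : V, v ≠ T.root ∧ r = (T.G.dist (φ v) (φ (T.par v)) : ℝ)}

/-- the composition operator `C_φ` maps `Lip₀` into itself and is bounded there. -/
def BoundedOnLip0 (T : LipTree V) (φ : V → V) : Prop :=
  (∀ f : V → ℂ, T.MemLip0 f → T.MemLip0 (f ∘ φ)) ∧
  ∃ C : ℝ, ∀ f : V → ℂ, T.MemLip0 f → T.normLip (f ∘ φ) ≤ C * T.normLip f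

/-- `u` belongs to the sector `S_v` determined by `v`. -/
def InSector (T : LipTree V) (v u : V) : Prop := ∃ k : ℕ, T.par^[k] u = v

end LipTree
/-! Since `φ` is injective, `f = ∑ₖ λᵏ χ_{φ^{k+1}(w)}` solves `f ∘ φ - λ f = χ_{w}`, and `f` tends
to `0` at infinity, hence lies in `Lip₀`. So every finitely supported function is in the range of
`C_φ - λ` on `Lip₀`, and these are dense in `Lip₀`: freeze `g` below a depth `N` beyond which its
increments are small, then taper it linearly to `0` over `n` further levels, with `n` large. -/

open Filter Topology Set

section GeometricSeries

variable {𝕜 : Type*} [NormedField 𝕜] [CompleteSpace 𝕜] {z : 𝕜}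

theorem summable_ite_pow (hz : ‖z‖ < 1) (p : ℕ → Prop) [DecidablePred p] :
    Summable fun k => if p k then z ^ k else 0 :=
  .of_norm_bounded (summable_geometric_of_lt_one (norm_nonneg z) hz) fun k => by
    split_ifs <;> simp [norm_pow]

theorem norm_tsum_ite_pow_le (hz : ‖z‖ < 1) {p : ℕ → Prop} [DecidablePred p] {K : ℕ}
    (hK : ∀ k < K, ¬p k) : ‖∑' k, if p k then z ^ k else 0‖ ≤ ‖z‖ ^ K / (1 - ‖z‖) := by
  rw [← (summable_ite_pow hz p).sum_add_tsum_nat_add K,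
    Finset.sum_eq_zero fun k hk => if_neg (hK k (Finset.mem_range.1 hk)), zero_add,
    div_eq_mul_inv]
  refine tsum_of_norm_bounded
    ((hasSum_geometric_of_lt_one (norm_nonneg z) hz).mul_left (‖z‖ ^ K)) fun k => ?_
  split_ifs <;> simp [norm_pow, pow_add, mul_comm]; positivity

end GeometricSeries

noncomputable def compSubSMul {V : Type*} (φ : V → V) (lam : ℂ) : (V → ℂ) →ₗ[ℂ] V → ℂ :=
  LinearMap.funLeft ℂ ℂ φ - lam • LinearMap.id

theorem compSubSMul_apply {V : Type*} (φ : V → V) (lam : ℂ) (f : V → ℂ) :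
    compSubSMul φ lam f = f ∘ φ - lam • f :=
  rfl

section OrbitSeries

variable {V : Type*} [DecidableEq V]

noncomputable def orbitSeries (φ : V → V) (lam : ℂ) (w v : V) : ℂ :=
  ∑' k : ℕ, if φ^[k + 1] w = v then lam ^ k else 0

variable {φ : V → V} {lam : ℂ}

theorem orbitSeries_apply_comp (hinj : Function.Injective φ) (hlam : ‖lam‖ < 1) (w v : V) :
    orbitSeries φ lam w (φ v) = (Pi.single w 1 : V → ℂ) v + lam * orbitSeries φ lam w v := by
  have hshift : ∀ k : ℕ, (if φ^[k + 1] w = φ v then lam ^ k else 0) =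
      if φ^[k] w = v then lam ^ k else 0 := fun k => by
    simp only [Function.iterate_succ_apply', hinj.eq_iff]
  rw [orbitSeries, tsum_congr hshift, (summable_ite_pow hlam _).tsum_eq_zero_add, orbitSeries,
    ← tsum_mul_left]
  congr 1
  · simp [Pi.single_apply, eq_comm]
  · refine tsum_congr fun k => ?_
    split_ifs <;> simp [pow_succ']

theorem compSubSMul_orbitSeries (hinj : Function.Injective φ) (hlam : ‖lam‖ < 1) (w : V) :
    compSubSMul φ lam (orbitSeries φ lam w) = Pi.single w 1 :=
  funext fun v => by simp [compSubSMul_apply, orbitSeries_apply_comp hinj hlam]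

theorem tendsto_orbitSeries_cofinite (hlam : ‖lam‖ < 1) (w : V) :
    Tendsto (orbitSeries φ lam w) cofinite (𝓝 0) := by
  refine Metric.tendsto_nhds.2 fun ε hε => eventually_cofinite.2 ?_
  obtain ⟨K, hK⟩ := exists_pow_lt_of_lt_one (mul_pos hε (sub_pos.2 hlam)) hlam
  refine ((Finset.range K).image fun k => φ^[k + 1] w).finite_toSet.subset fun v hv => ?_
  by_contra hvK
  refine hv ?_
  rw [dist_zero_right, orbitSeries]
  refine (norm_tsum_ite_pow_le (K := K) hlam fun k hk h => hvK ?_).trans_lt ?_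
  · exact Finset.mem_coe.2 (Finset.mem_image.2 ⟨k, Finset.mem_range.2 hk, h⟩)
  · rwa [div_lt_iff₀ (sub_pos.2 hlam)]

end OrbitSeries

namespace LipTree

variable {V : Type*} (T : LipTree V)

theorem depth_root : T.depth T.root = 0 :=
  SimpleGraph.dist_self

theorem depth_eq_zero_iff {v : V} : T.depth v = 0 ↔ v = T.root :=
  T.isTree.connected.dist_eq_zero_iff

theorem depth_par (v : V) : T.depth (T.par v) = T.depth v - 1 := by
  by_cases hv : v = T.root
  · simp [hv, par_root, depth_root]
  · have := T.dist_par v hv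
    unfold depth
    omega

theorem depth_iterate_par (k : ℕ) (v : V) : T.depth (T.par^[k] v) = T.depth v - k := by
  induction k generalizing v with
  | zero => rfl
  | succ k ih => rw [Function.iterate_succ_apply, ih, depth_par]; omega

theorem finite_par_preimage_singleton (u : V) : (T.par ⁻¹' {u}).Finite :=
  ((T.locFin u).insert T.root).subset fun v (hv : T.par v = u) => by
    by_cases h : v = T.root
    · exact Or.inl h
    · exact Or.inr (hv ▸ (T.adj_par v h).symm)

theorem finite_setOf_depth_le (N : ℕ) : {v | T.depth v ≤ N}.Finite := by
  induction N with
  | zero => simp [T.depth_eq_zero_iff]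
  | succ N ih =>
    refine ((ih.preimage' fun u _ => T.finite_par_preimage_singleton u).insert T.root).subset ?_
    intro v (hv : T.depth v ≤ N + 1)
    by_cases h : v = T.root
    · exact Or.inl h
    · exact Or.inr (show T.depth (T.par v) ≤ N by rw [depth_par]; omega)

theorem comap_depth_atTop_le_cofinite : atTop.comap T.depth ≤ cofinite :=
  le_cofinite_iff_compl_singleton_mem.2 fun v =>
    mem_comap.2 ⟨Ioi (T.depth v), Ioi_mem_atTop _, fun u hu (h : u = v) => by
      subst h; exact lt_irrefl (T.depth u) hu⟩

theorem tendsto_par_comap_depth : Tendsto T.par (atTop.comap T.depth) (atTop.comap T.depth) := by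
  refine tendsto_comap_iff.2 ?_
  simpa only [Function.comp_def, depth_par] using (tendsto_sub_atTop_nat 1).comp tendsto_comap

theorem memLip0_iff {f : V → ℂ} : T.MemLip0 f ↔ T.MemLip f ∧
    Tendsto (fun v => f v - f (T.par v)) (atTop.comap T.depth) (𝓝 0) := by
  rw [MemLip0, (atTop_basis.comap T.depth).tendsto_iff Metric.nhds_basis_ball]
  refine and_congr_right fun _ => forall₂_congr fun ε _ => ⟨?_, ?_⟩
  · rintro ⟨N, hN⟩
    refine ⟨N + 1, trivial, fun v (hv : N + 1 ≤ T.depth v) =>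
      mem_ball_zero_iff.2 (hN v ?_ (by omega))⟩
    rintro rfl
    rw [depth_root] at hv
    omega
  · rintro ⟨N, -, hN⟩
    exact ⟨N, fun v _ hv => mem_ball_zero_iff.1 (hN v hv)⟩


theorem memLip0_of_tendsto_cofinite {f : V → ℂ} (hf : Tendsto f cofinite (𝓝 0)) :
    T.MemLip0 f := by
  obtain ⟨C, hC⟩ := hf.norm.bddAbove_range_of_cofinite
  have hf' := hf.mono_left T.comap_depth_atTop_le_cofinite
  refine T.memLip0_iff.2 ⟨⟨C + C, fun v _ =>
    (norm_sub_le _ _).trans (add_le_add (hC ⟨v, rfl⟩) (hC ⟨_, rfl⟩))⟩, ?_⟩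
  simpa using hf'.sub (hf'.comp T.tendsto_par_comap_depth)

def lip0 : Submodule ℂ (V → ℂ) where
  carrier := {f | T.MemLip0 f}
  zero_mem' := T.memLip0_iff.2 ⟨⟨0, fun v _ => by simp⟩, by simpa using tendsto_const_nhds⟩
  add_mem' {f g} hf hg := by
    obtain ⟨⟨C, hC⟩, hf⟩ := T.memLip0_iff.1 hf
    obtain ⟨⟨D, hD⟩, hg⟩ := T.memLip0_iff.1 hg
    refine T.memLip0_iff.2 ⟨⟨C + D, fun v hv => ?_⟩, by simpa [add_sub_add_comm] using hf.add hg⟩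
    calc ‖(f + g) v - (f + g) (T.par v)‖ = ‖(f v - f (T.par v)) + (g v - g (T.par v))‖ := by
          simp [add_sub_add_comm]
      _ ≤ C + D := (norm_add_le _ _).trans (add_le_add (hC v hv) (hD v hv))
  smul_mem' c f hf := by
    obtain ⟨⟨C, hC⟩, hf⟩ := T.memLip0_iff.1 hf
    refine T.memLip0_iff.2 ⟨⟨‖c‖ * C, fun v hv => ?_⟩, by simpa [← mul_sub] using hf.const_smul c⟩
    simpa [← mul_sub, norm_mul] using mul_le_mul_of_nonneg_left (hC v hv) (norm_nonneg c)

theorem normLip_le {f : V → ℂ} {δ : ℝ} (hroot : ‖f T.root‖ ≤ δ)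
    (hpar : ∀ v ≠ T.root, ‖f v - f (T.par v)‖ ≤ δ) : T.normLip f ≤ δ :=
  max_le hroot <| Real.sSup_le (by rintro _ ⟨v, hv, rfl⟩; exact hpar v hv)
    ((norm_nonneg _).trans hroot)

section Range

variable [DecidableEq V] {φ : V → V} {lam : ℂ}

theorem single_mem_map_lip0 (hinj : Function.Injective φ) (hlam : ‖lam‖ < 1) (w : V) :
    Pi.single w 1 ∈ T.lip0.map (compSubSMul φ lam) :=
  ⟨orbitSeries φ lam w, T.memLip0_of_tendsto_cofinite (tendsto_orbitSeries_cofinite hlam w),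
    compSubSMul_orbitSeries hinj hlam w⟩

theorem mem_map_lip0_of_support_finite (hinj : Function.Injective φ) (hlam : ‖lam‖ < 1)
    {s : V → ℂ} (hs : s.support.Finite) : s ∈ T.lip0.map (compSubSMul φ lam) := by
  have hsum : s = ∑ u ∈ hs.toFinset, s u • Pi.single u 1 := by
    ext v
    simp [Finset.sum_apply, Pi.single_apply]
  rw [hsum]
  exact Submodule.sum_mem _ fun u _ => Submodule.smul_mem _ _ (T.single_mem_map_lip0 hinj hlam u)

end Range

noncomputable def freezeAt (N : ℕ) (g : V → ℂ) (v : V) : ℂ :=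
  g (T.par^[T.depth v - N] v)

theorem freezeAt_of_depth_le {N : ℕ} (g : V → ℂ) {v : V} (hv : T.depth v ≤ N) :
    T.freezeAt N g v = g v := by
  rw [freezeAt, Nat.sub_eq_zero_of_le hv, Function.iterate_zero_apply]

theorem freezeAt_par {N : ℕ} (g : V → ℂ) {v : V} (hv : N < T.depth v) :
    T.freezeAt N g (T.par v) = T.freezeAt N g v := by
  rw [freezeAt, freezeAt, depth_par, ← Function.iterate_succ_apply]
  congr 2
  omega

theorem bddAbove_range_norm_freezeAt (N : ℕ) (g : V → ℂ) :
    BddAbove (range fun v => ‖T.freezeAt N g v‖) :=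
  ((T.finite_setOf_depth_le N).image fun v => ‖g v‖).bddAbove.mono <| by
    rintro _ ⟨v, rfl⟩
    exact ⟨_, show _ ≤ N by rw [depth_iterate_par]; omega, rfl⟩

noncomputable def cutoff (N n : ℕ) (v : V) : ℝ :=
  ((n - (T.depth v - N) : ℕ) : ℝ) / n

theorem cutoff_of_depth_le {N n : ℕ} (hn : n ≠ 0) {v : V} (hv : T.depth v ≤ N) :
    T.cutoff N n v = 1 := by
  rw [cutoff, Nat.sub_eq_zero_of_le hv, Nat.sub_zero, div_self (Nat.cast_ne_zero.2 hn)]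

theorem support_cutoff_subset (N n : ℕ) :
    (T.cutoff N n).support ⊆ {v | T.depth v ≤ N + n} := by
  intro v hv
  by_contra h
  have hn : n ≤ T.depth v - N := by
    have : ¬T.depth v ≤ N + n := h
    omega
  exact hv (by rw [cutoff, Nat.sub_eq_zero_of_le hn]; simp)

theorem abs_cutoff_sub_cutoff_par_le (N n : ℕ) (v : V) :
    |T.cutoff N n v - T.cutoff N n (T.par v)| ≤ 1 / n := by
  rw [cutoff, cutoff, depth_par, ← sub_div, abs_div, Nat.abs_cast]
  gcongr
  obtain ⟨h1, h2⟩ : n - (T.depth v - N) ≤ n - (T.depth v - 1 - N) ∧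
      n - (T.depth v - 1 - N) ≤ n - (T.depth v - N) + 1 := by omega
  have h1' := (Nat.cast_le (α := ℝ)).2 h1
  have h2' := (Nat.cast_le (α := ℝ)).2 h2
  push_cast at h2'
  rw [abs_le]
  constructor <;> linarith

theorem exists_support_finite_normLip_sub_lt {g : V → ℂ} (hg : T.MemLip0 g) {ε : ℝ}
    (hε : 0 < ε) : ∃ s : V → ℂ, s.support.Finite ∧ T.normLip (s - g) < ε := by
  obtain ⟨N, hN⟩ := hg.2 (ε / 2) (half_pos hε)
  obtain ⟨K, hK⟩ := T.bddAbove_range_norm_freezeAt N g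
  have hK0 : 0 ≤ K := (norm_nonneg _).trans (hK ⟨T.root, rfl⟩)
  obtain ⟨n, hn⟩ := exists_nat_gt (K / (ε / 2))
  have hn0 : (0 : ℝ) < n := (div_nonneg hK0 (half_pos hε).le).trans_lt hn
  have hKn : K / n < ε / 2 := by
    rw [div_lt_iff₀ (half_pos hε)] at hn
    rw [div_lt_iff₀ hn0]
    linarith
  set c := T.cutoff N n
  set q := T.freezeAt N g
  have hs : ∀ v, T.depth v ≤ N → (c • q) v = g v := fun v hv => by
    simp [c, q, T.cutoff_of_depth_le (Nat.cast_pos.1 hn0).ne' hv, T.freezeAt_of_depth_le g hv]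
  refine ⟨c • q, (T.finite_setOf_depth_le (N + n)).subset
    ((Function.support_smul_subset_left c q).trans (T.support_cutoff_subset N n)), ?_⟩
  refine (T.normLip_le (δ := K / n + ε / 2) ?_ fun v hv => ?_).trans_lt (by linarith)
  · simp [hs T.root (by simp [depth_root])]
    positivity
  rcases le_or_gt (T.depth v) N with h | h
  · have hp : T.depth (T.par v) ≤ N := by rw [depth_par]; omega
    simp [hs v h, hs _ hp]
    positivity
  calc ‖(c • q - g) v - (c • q - g) (T.par v)‖
      = ‖(c v - c (T.par v)) • q v - (g v - g (T.par v))‖ := by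
        rw [Pi.sub_apply, Pi.sub_apply, Pi.smul_apply', Pi.smul_apply',
          show q (T.par v) = q v from T.freezeAt_par g h, sub_smul]
        congr 1
        abel
    _ ≤ 1 / n * K + ε / 2 := by
        refine (norm_sub_le _ _).trans (add_le_add ?_ (hN v hv h.le).le)
        rw [norm_smul, Real.norm_eq_abs]
        exact mul_le_mul (T.abs_cutoff_sub_cutoff_par_le N n v) (hK ⟨v, rfl⟩) (norm_nonneg _)
          (by positivity)
    _ = K / n + ε / 2 := by ring

end LipTree

open scoped Classical in
/-- If `φ` is injective and `|λ| < 1`, then `C_φ - λ` has dense range on `Lip₀`; more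
precisely each indicator `χ_{w}` lies in the range of `C_φ - λ`. -/
theorem dense_range_small_lambda {V : Type*} (T : LipTree V) (φ : V → V)
    (hinj : Function.Injective φ) (lam : ℂ) (hlam : ‖lam‖ < 1) :
    (∀ w : V, ∃ f : V → ℂ, T.MemLip0 f ∧
      (f ∘ φ - lam • f) = fun v : V => if v = w then (1 : ℂ) else 0) ∧
    (∀ g : V → ℂ, T.MemLip0 g → ∀ ε : ℝ, 0 < ε →
      ∃ f : V → ℂ, T.MemLip0 f ∧ T.normLip (f ∘ φ - lam • f - g) < ε) := by
  refine ⟨fun w => ?_, fun g hg ε hε => ?_⟩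
  · obtain ⟨f, hf, hfw⟩ := T.single_mem_map_lip0 hinj hlam w
    exact ⟨f, hf, hfw.trans (funext fun v => Pi.single_apply w 1 v)⟩
  · obtain ⟨s, hs, hsg⟩ := T.exists_support_finite_normLip_sub_lt hg hε
    obtain ⟨f, hf, hfs⟩ := T.mem_map_lip0_of_support_finite hinj hlam hs
    exact ⟨f, hf, by rwa [← compSubSMul_apply, hfs]⟩
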